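/- Let D : ℝ^d → ℝ^d satisfy D(0) = 0 and |D(x)−D(y)| ≤ λ|x−y| with 0 < λ < 1, and let p ≥ 2. Suppose X : [−τ, T] → ℝ^d is a function with τ > 0, and set M(t) = sup_{0 ≤ s ≤ t} |X(s)|^p, K = sup_{−τ ≤ s ≤ 0} |X(s)|^p, and N(t) = sup_{0 ≤ s ≤ t} |X(s) − D(X(s−τ))|^p. Then for every t ∈ [0,T], M(t) ≤ (λ/(1−λ)) K + (1−λ)^{−p} N(t). -/

import Mathlib

/-!
Since `D 0 = 0` and `D` is a `λ`-contraction, `‖X s‖ ≤ λ ‖X (s - τ)‖ + ‖X s - D (X (s - τ))‖`,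
and convexity of `x ↦ x ^ p` with weights `λ, 1 - λ` turns this into
`‖X s‖ ^ p ≤ λ ‖X (s - τ)‖ ^ p + (1 - λ) ^ (1 - p) ‖X s - D (X (s - τ))‖ ^ p`.
As `s - τ` lies in `[-τ, 0]` or in `[0, t]`, taking suprema gives
`M ≤ λ max K M + (1 - λ) ^ (1 - p) N`, and solving for `M` gives the bound.
-/

open Set

theorem Real.rpow_mul_add_le {lam p a b : ℝ} (hlam0 : 0 ≤ lam) (hlam1 : lam < 1) (hp : 1 ≤ p)
    (ha : 0 ≤ a) (hb : 0 ≤ b) :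
    (lam * a + b) ^ p ≤ lam * a ^ p + (1 - lam) ^ (1 - p) * b ^ p := by
  have hlam : 0 < 1 - lam := by linarith
  -- write `b = (1 - lam) * (b / (1 - lam))` and use convexity of `x ↦ x ^ p`
  have hconv := (convexOn_rpow hp).2 (mem_Ici.2 ha) (mem_Ici.2 (div_nonneg hb hlam.le))
    hlam0 hlam.le (by ring)
  simp only [smul_eq_mul, mul_div_cancel₀ _ hlam.ne'] at hconv
  refine hconv.trans_eq ?_
  rw [Real.div_rpow hb hlam.le, Real.rpow_sub hlam, Real.rpow_one]
  field_simp

theorem norm_le_mul_norm_of_map_zero {E : Type*} [SeminormedAddCommGroup E] {D : E → E}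
    {lam : ℝ} (hD0 : D 0 = 0) (hD : ∀ x y, ‖D x - D y‖ ≤ lam * ‖x - y‖) (y : E) :
    ‖D y‖ ≤ lam * ‖y‖ := by
  simpa [hD0] using hD y 0

theorem norm_le_mul_norm_add_norm_sub {E : Type*} [SeminormedAddCommGroup E] {D : E → E}
    {lam : ℝ} (hD0 : D 0 = 0) (hD : ∀ x y, ‖D x - D y‖ ≤ lam * ‖x - y‖) (x y : E) :
    ‖x‖ ≤ lam * ‖y‖ + ‖x - D y‖ := by
  calc ‖x‖ = ‖D y + (x - D y)‖ := by rw [add_sub_cancel]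
    _ ≤ ‖D y‖ + ‖x - D y‖ := norm_add_le _ _
    _ ≤ lam * ‖y‖ + ‖x - D y‖ := by gcongr; exact norm_le_mul_norm_of_map_zero hD0 hD y

theorem norm_sub_le_norm_add_mul_norm {E : Type*} [SeminormedAddCommGroup E] {D : E → E}
    {lam : ℝ} (hD0 : D 0 = 0) (hD : ∀ x y, ‖D x - D y‖ ≤ lam * ‖x - y‖) (x y : E) :
    ‖x - D y‖ ≤ ‖x‖ + lam * ‖y‖ :=
  (norm_sub_le _ _).trans (add_le_add_right (norm_le_mul_norm_of_map_zero hD0 hD y) _)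

theorem norm_rpow_le_of_contraction {E : Type*} [SeminormedAddCommGroup E] {D : E → E}
    {lam p : ℝ} (hlam0 : 0 ≤ lam) (hlam1 : lam < 1) (hp : 1 ≤ p) (hD0 : D 0 = 0)
    (hD : ∀ x y, ‖D x - D y‖ ≤ lam * ‖x - y‖) (x y : E) :
    ‖x‖ ^ p ≤ lam * ‖y‖ ^ p + (1 - lam) ^ (1 - p) * ‖x - D y‖ ^ p :=
  (Real.rpow_le_rpow (norm_nonneg _) (norm_le_mul_norm_add_norm_sub hD0 hD x y)
    (by linarith)).trans (Real.rpow_mul_add_le hlam0 hlam1 hp (norm_nonneg _) (norm_nonneg _))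

theorem le_div_mul_add_of_le_mul_max_add {lam K M c : ℝ} (hlam0 : 0 ≤ lam) (hlam1 : lam < 1)
    (hK : 0 ≤ K) (hc : 0 ≤ c) (h : M ≤ lam * max K M + (1 - lam) * c) :
    M ≤ lam / (1 - lam) * K + c := by
  have hlam : 0 < 1 - lam := by linarith
  have hKdiv : 0 ≤ lam / (1 - lam) * K := by positivity
  rcases le_total K M with hKM | hMK
  · rw [max_eq_right hKM] at h
    have : M ≤ c := le_of_mul_le_mul_left (by linarith) hlam
    linarith
  · rw [max_eq_left hMK] at h
    have hlamK : lam * K ≤ lam / (1 - lam) * K := by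
      gcongr
      exact le_div_self hlam0 hlam (by linarith)
    nlinarith

theorem bddAbove_image_rpow {α : Type*} {u : α → ℝ} {I : Set α} {C p : ℝ} (hp : 0 ≤ p)
    (hu0 : ∀ s ∈ I, 0 ≤ u s) (hu : ∀ s ∈ I, u s ≤ C) :
    BddAbove ((fun s => u s ^ p) '' I) := by
  refine ⟨C ^ p, ?_⟩
  rintro _ ⟨s, hs, rfl⟩
  exact Real.rpow_le_rpow (hu0 s hs) (hu s hs) hp

theorem sSup_image_Icc_le_of_delay {f g : ℝ → ℝ} {τ t a b : ℝ} (hτ : 0 ≤ τ) (ht : 0 ≤ t)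
    (ha : 0 ≤ a) (hb : 0 ≤ b) (hf : BddAbove (f '' Icc (-τ) t)) (hg : BddAbove (g '' Icc 0 t))
    (h : ∀ s ∈ Icc 0 t, f s ≤ a * f (s - τ) + b * g s) :
    sSup (f '' Icc 0 t) ≤
      a * max (sSup (f '' Icc (-τ) 0)) (sSup (f '' Icc 0 t)) + b * sSup (g '' Icc 0 t) := by
  refine csSup_le ((nonempty_Icc.2 ht).image f) ?_
  rintro _ ⟨s, hs, rfl⟩
  have hdelay : f (s - τ) ≤ max (sSup (f '' Icc (-τ) 0)) (sSup (f '' Icc 0 t)) := by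
    rcases le_total (s - τ) 0 with hneg | hpos
    · refine le_max_of_le_left (le_csSup (hf.mono (image_mono ?_)) ⟨s - τ, ⟨?_, hneg⟩, rfl⟩)
      · exact Icc_subset_Icc le_rfl ht
      · linarith [hs.1]
    · refine le_max_of_le_right (le_csSup (hf.mono (image_mono ?_)) ⟨s - τ, ⟨hpos, ?_⟩, rfl⟩)
      · exact Icc_subset_Icc (by linarith) le_rfl
      · linarith [hs.2]
  calc f s ≤ a * f (s - τ) + b * g s := h s hs
    _ ≤ _ := by gcongr; exact le_csSup hg ⟨s, hs, rfl⟩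

theorem stmt_11 (d : ℕ) (lam p τ T : ℝ) (hlam0 : 0 < lam) (hlam1 : lam < 1)
    (hp : 2 ≤ p) (hτ : 0 < τ)
    (D : EuclideanSpace ℝ (Fin d) → EuclideanSpace ℝ (Fin d))
    (hD0 : D 0 = 0) (hD : ∀ x y, ‖D x - D y‖ ≤ lam * ‖x - y‖)
    (X : ℝ → EuclideanSpace ℝ (Fin d))
    (hbdd : BddAbove ((fun s => ‖X s‖) '' Set.Icc (-τ) T))
    (t : ℝ) (ht0 : 0 ≤ t) (htT : t ≤ T) :
    sSup ((fun s => ‖X s‖ ^ p) '' Set.Icc 0 t) ≤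
      (lam / (1 - lam)) * sSup ((fun s => ‖X s‖ ^ p) '' Set.Icc (-τ) 0) +
        (1 - lam) ^ (-p) * sSup ((fun s => ‖X s - D (X (s - τ))‖ ^ p) '' Set.Icc 0 t) := by
  have hlam : 0 < 1 - lam := by linarith
  obtain ⟨C, hC⟩ := hbdd
  have hX : ∀ s ∈ Icc (-τ) T, ‖X s‖ ≤ C := fun s hs => hC ⟨s, hs, rfl⟩
  have hf : BddAbove ((fun s => ‖X s‖ ^ p) '' Icc (-τ) t) :=
    bddAbove_image_rpow (by linarith) (fun _ _ => norm_nonneg _)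
      fun s hs => hX s ⟨hs.1, hs.2.trans htT⟩
  have hg : BddAbove ((fun s => ‖X s - D (X (s - τ))‖ ^ p) '' Icc 0 t) := by
    refine bddAbove_image_rpow (C := C + lam * C) (by linarith) (fun _ _ => norm_nonneg _)
      fun s hs => (norm_sub_le_norm_add_mul_norm hD0 hD _ _).trans ?_
    gcongr
    · exact hX s ⟨by linarith [hs.1], hs.2.trans htT⟩
    · exact hX (s - τ) ⟨by linarith [hs.1], by linarith [hs.2]⟩
  have hM := sSup_image_Icc_le_of_delay hτ.le ht0 hlam0.le (Real.rpow_nonneg hlam.le _) hf hg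
    fun s _ => norm_rpow_le_of_contraction hlam0.le hlam1 (by linarith) hD0 hD (X s) (X (s - τ))
  have hpow : (1 - lam) ^ (1 - p) = (1 - lam) * (1 - lam) ^ (-p) := by
    rw [sub_eq_add_neg (1 : ℝ) p, Real.rpow_add hlam, Real.rpow_one]
  rw [hpow, mul_assoc] at hM
  exact le_div_mul_add_of_le_mul_max_add hlam0.le hlam1
    (Real.sSup_nonneg (forall_mem_image.2 fun _ _ => by positivity))
    (mul_nonneg (by positivity) (Real.sSup_nonneg (forall_mem_image.2 fun _ _ => by positivity)))
    hM
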